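/- arXiv:2110.14605 — 4 statements merged into one kernel-verified Lean document; each statement's English description precedes it below -/
import Mathlib

section
/- Let q be a power of 2 with q ≥ 4. Then every element of PGL₂(𝔽_q), acting on the projective line ℙ¹(𝔽_q) (a set of q+1 points), induces an even permutation. -/
/-!
The sign of the action on `ℙ¹(𝔽_q)` is a homomorphism `GL₂(𝔽_q) → ℤˣ` into an abelian group, so
it kills `SL₂(𝔽_q)`, which is perfect for `q ≥ 4`. For any `g`, `det (g ^ (q - 1)) = 1`, so the
sign `s` of `g` satisfies `s ^ (q - 1) = 1`; as `q - 1` is odd, `s = 1`.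
-/

theorem FiniteField.exists_ne_zero_sq_ne_one {F : Type*} [Field F] [Fintype F]
    (hF : 4 ≤ Fintype.card F) : ∃ a : F, a ≠ 0 ∧ a ^ 2 ≠ 1 := by
  classical
  by_contra! h
  have hsub : (Finset.univ : Finset F) ⊆ {0, 1, -1} := fun a _ => by
    by_cases ha : a = 0
    · simp [ha]
    · simpa [ha] using sq_eq_one_iff.1 (h a ha)
  have := (Finset.card_le_card hsub).trans Finset.card_le_three
  rw [Finset.card_univ] at this
  omega

theorem Int.units_eq_one_of_pow_eq_one_of_odd {u : ℤˣ} {k : ℕ} (hu : u ^ k = 1) (hk : Odd k) :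
    u = 1 := by
  rwa [Int.units_pow_eq_pow_mod_two, Nat.odd_iff.1 hk, pow_one] at hu

theorem LinearEquiv.det_pow_card_sub_one_eq_one {F V : Type*} [Field F] [Fintype F]
    [AddCommGroup V] [Module F V] (g : V ≃ₗ[F] V) :
    LinearEquiv.det (g ^ (Fintype.card F - 1)) = 1 := by
  rw [map_pow]
  exact Units.ext (by simpa using FiniteField.pow_card_sub_one_eq_one _ (LinearEquiv.det g).ne_zero)

theorem SpecialLinearGroup.fin_two_hom_to_commGroup_eq_one {F A : Type*} [Field F] [CommGroup A]
    {a : F} (ha : a ≠ 0) (ha2 : a ^ 2 ≠ 1) (φ : SpecialLinearGroup F (Fin 2 → F) →* A)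
    (u : SpecialLinearGroup F (Fin 2 → F)) : φ u = 1 := by
  have hu := Abelianization.commutator_subset_ker
    (φ.comp Matrix.SpecialLinearGroup.toLin'_equiv.toMonoidHom)
    (Matrix.SL2.commutator_eq_top ha ha2 ▸
      Subgroup.mem_top (Matrix.SpecialLinearGroup.toLin'_equiv.symm u))
  simpa using hu

theorem LinearEquiv.fin_two_hom_to_intUnits_eq_one {F : Type*} [Field F] [Fintype F]
    (hF : 4 ≤ Fintype.card F) (hodd : Odd (Fintype.card F - 1))
    (φ : ((Fin 2 → F) ≃ₗ[F] (Fin 2 → F)) →* ℤˣ) (g : (Fin 2 → F) ≃ₗ[F] (Fin 2 → F)) :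
    φ g = 1 := by
  obtain ⟨a, ha, ha2⟩ := FiniteField.exists_ne_zero_sq_ne_one hF
  refine Int.units_eq_one_of_pow_eq_one_of_odd ?_ hodd
  rw [← map_pow]
  exact SpecialLinearGroup.fin_two_hom_to_commGroup_eq_one ha ha2
    (φ.comp SpecialLinearGroup.toLinearEquiv) ⟨_, g.det_pow_card_sub_one_eq_one⟩

/-- For `q = 2^n` with `n ≥ 2`, every element of `PGL₂(𝔽_q)` (given by a linear
automorphism `g` of `𝔽_q²`) induces an even permutation of the projective line `ℙ¹(𝔽_q)`. -/
theorem pgl2_even_char_two (F : Type) [Field F] [Fintype F]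
    (n : ℕ) (hn : 2 ≤ n) (hq : Fintype.card F = 2 ^ n)
    [Fintype (Projectivization F (Fin 2 → F))]
    [DecidableEq (Projectivization F (Fin 2 → F))]
    (g : (Fin 2 → F) ≃ₗ[F] (Fin 2 → F))
    (σ : Equiv.Perm (Projectivization F (Fin 2 → F)))
    (hσ : ∀ (v : Fin 2 → F) (hv : v ≠ 0),
      σ (Projectivization.mk F v hv) =
        Projectivization.mk F (g v) (by simpa using hv)) :
    Equiv.Perm.sign σ = 1 := by
  have hσg : σ = MulAction.toPerm g := by
    ext p
    induction p using Projectivization.ind with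
    | h v hv => exact hσ v hv
  have hF : 4 ≤ Fintype.card F := hq ▸ Nat.pow_le_pow_right two_pos hn
  have hodd : Odd (Fintype.card F - 1) :=
    hq ▸ Nat.Even.sub_odd Nat.one_le_two_pow ((Nat.even_pow' (by omega)).2 even_two) odd_one
  rw [hσg]
  exact LinearEquiv.fin_two_hom_to_intUnits_eq_one hF hodd
    (Equiv.Perm.sign.comp (MulAction.toPermHom _ _)) g
end

section
/- Let G be a finitely generated group acting by automorphisms on a CAT(0) cube complex X, and let x₀ be a vertex. Then the convex hull of the orbit G·x₀ is a G-invariant convex subcomplex on which G acts with finitely many orbits of hyperplanes. -/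
/-- A combinatorial model of (the 1-skeleton of) a CAT(0) cube complex, encoded by its vertex
set `V` together with its set of hyperplanes `H` and the side (halfspace) function `side`:
* every hyperplane has two nonempty sides;
* any two vertices are separated by finitely many hyperplanes;
* from any vertex `x ≠ y` one can move along an edge (crossing exactly one hyperplane)
  strictly decreasing the set of hyperplanes separating it from `y` (so the graph metric
  equals the number of separating hyperplanes, as in a CAT(0) cube complex). -/
structure CubeCpx where
  V : Type
  H : Type
  side : H → V → Bool
  exists_both : ∀ h : H, (∃ v, side h v = true) ∧ (∃ v, side h v = false)
  sep_finite : ∀ x y : V, {h | side h x ≠ side h y}.Finite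
  descent : ∀ x y : V, x ≠ y → ∃ z : V,
      (∃ h, side h x ≠ side h z ∧ ∀ h', side h' x ≠ side h' z → h' = h) ∧
      {h | side h z ≠ side h y} ⊂ {h | side h x ≠ side h y}

namespace CubeCpx

variable (X : CubeCpx)

/-- The hyperplane `h` separates the vertices `x` and `y`. -/
def Sep (h : X.H) (x y : X.V) : Prop := X.side h x ≠ X.side h y

/-- Two vertices are adjacent (joined by an edge) iff exactly one hyperplane separates them. -/
def AdjV (x y : X.V) : Prop := ∃ h, X.Sep h x y ∧ ∀ h', X.Sep h' x y → h' = h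

/-- The combinatorial distance: the number of hyperplanes separating `x` and `y`. -/
noncomputable def dist (x y : X.V) : ℕ := (X.sep_finite x y).toFinset.card

/-- Two hyperplanes are transverse iff they cross: all four quadrants are nonempty. -/
def Transverse (h h' : X.H) : Prop :=
  h ≠ h' ∧ ∀ b b' : Bool, ∃ v, X.side h v = b ∧ X.side h' v = b'

/-- `v` lies in the carrier `N(h)` of the hyperplane `h`: some edge at `v` crosses `h`. -/
def InCarrier (h : X.H) (v : X.V) : Prop := ∃ w, X.AdjV v w ∧ X.Sep h v w

/-- `d∞(x,y)`: the maximal number of pairwise non-transverse hyperplanes separating `x`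
and `y`. -/
noncomputable def dInf (x y : X.V) : ℕ :=
  sSup {n | ∃ S : Finset X.H, S.card = n ∧ (∀ h ∈ S, X.Sep h x y) ∧
    (S : Set X.H).Pairwise fun a b => ¬ X.Transverse a b}

/-- `X` contains no infinite cube: there is no vertex lying in the carriers of infinitely many
pairwise transverse hyperplanes (such a family would span an infinite cube). -/
def NoInfiniteCube : Prop :=
  ∀ (v : X.V) (T : Set X.H), (∀ h ∈ T, X.InCarrier h v) → T.Pairwise X.Transverse → T.Finite

/-- `d∞`-distance from a vertex to the carrier of a hyperplane. -/
noncomputable def dToCarrier (h : X.H) (x : X.V) : ℕ :=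
  sInf {n | ∃ w, X.InCarrier h w ∧ X.dInf x w = n}

/-- The depth of the halfspace of `h` given by side `b`: the maximal `d∞`-distance from one of
its vertices to the carrier `N(h)`. -/
noncomputable def depth (h : X.H) (b : Bool) : ℕ :=
  sSup {n | ∃ v, X.side h v = b ∧ X.dToCarrier h v = n}

end CubeCpx

/-- Let a finitely generated group `G` act by automorphisms on a CAT(0) cube
complex `X` (acting on vertices and hyperplanes, preserving the separation relation), and let
`x₀` be a vertex. Then the convex hull of the orbit `G·x₀` (the intersection of all halfspaces
containing the orbit) is a `G`-invariant convex subcomplex, and `G` acts on it with finitely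
many orbits of hyperplanes (i.e. the hyperplanes crossing it fall into finitely many
`G`-orbits). -/
theorem convexHull_orbit_finitely_many_hyperplane_orbits
    (X : CubeCpx) (G : Type) [Group G] [MulAction G X.V] [MulAction G X.H]
    (compat : ∀ (g : G) (h : X.H) (x y : X.V), X.Sep (g • h) (g • x) (g • y) ↔ X.Sep h x y)
    (hfg : ∃ S : Finset G, Subgroup.closure (S : Set G) = ⊤)
    (x₀ : X.V) :
    (∀ (g : G), ∀ v ∈ {v : X.V | ∀ (h : X.H) (b : Bool),
        (∀ g' : G, X.side h (g' • x₀) = b) → X.side h v = b},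
      g • v ∈ {v : X.V | ∀ (h : X.H) (b : Bool),
        (∀ g' : G, X.side h (g' • x₀) = b) → X.side h v = b}) ∧
    (∀ x ∈ {v : X.V | ∀ (h : X.H) (b : Bool),
        (∀ g' : G, X.side h (g' • x₀) = b) → X.side h v = b},
      ∀ y ∈ {v : X.V | ∀ (h : X.H) (b : Bool),
        (∀ g' : G, X.side h (g' • x₀) = b) → X.side h v = b},
      ∀ z : X.V, (∀ h : X.H, X.Sep h x z → X.Sep h x y) →
        z ∈ {v : X.V | ∀ (h : X.H) (b : Bool),
          (∀ g' : G, X.side h (g' • x₀) = b) → X.side h v = b}) ∧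
    (∃ F : Finset X.H, ∀ h : X.H,
      (∃ g₁ g₂ : G, X.Sep h (g₁ • x₀) (g₂ • x₀)) →
      ∃ g : G, ∃ h₀ ∈ F, h = g • h₀) := by
  classical
  obtain ⟨S, hS⟩ := hfg
  refine ⟨?_, ?_, ?_⟩
  · intro g v hv h b hb
    have hconst : ∀ g' : G, X.side (g⁻¹ • h) (g' • x₀) = X.side (g⁻¹ • h) x₀ := by
      intro g'
      by_contra hne
      have hsep : X.Sep (g⁻¹ • h) (g' • x₀) x₀ := hne
      have := (compat g (g⁻¹ • h) (g' • x₀) x₀).mpr hsep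
      rw [smul_inv_smul, smul_smul] at this
      exact this (by rw [hb (g * g'), hb g])
    have hv' : X.side (g⁻¹ • h) v = X.side (g⁻¹ • h) x₀ := hv _ _ hconst
    have hnsep : ¬ X.Sep (g⁻¹ • h) v x₀ := fun hs => hs hv'
    have hnsep2 : ¬ X.Sep h (g • v) (g • x₀) := by
      intro hs
      apply hnsep
      exact (compat g (g⁻¹ • h) v x₀).mp (by rwa [smul_inv_smul])
    have : X.side h (g • v) = X.side h (g • x₀) := not_ne_iff.mp hnsep2
    rw [this, hb g]
  · intro x hx y hy z hz h b hb
    have hxy : ¬ X.Sep h x y := by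
      intro hs; exact hs (by rw [hx h b hb, hy h b hb])
    have hxz : ¬ X.Sep h x z := fun hs => hxy (hz h hs)
    have : X.side h x = X.side h z := not_ne_iff.mp hxz
    rw [← this, hx h b hb]
  · refine ⟨S.biUnion (fun s => (X.sep_finite x₀ (s • x₀)).toFinset), ?_⟩
    have key : ∀ g : G, ∀ h : X.H, X.Sep h x₀ (g • x₀) →
        ∃ g' : G, ∃ h₀ ∈ S.biUnion (fun s => (X.sep_finite x₀ (s • x₀)).toFinset),
          h = g' • h₀ := by
      intro g
      have hg : g ∈ Subgroup.closure (S : Set G) := by rw [hS]; trivial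
      induction hg using Subgroup.closure_induction with
      | mem s hs =>
        intro h hsep
        exact ⟨1, h, Finset.mem_biUnion.mpr ⟨s, hs, (X.sep_finite x₀ (s • x₀)).mem_toFinset.mpr hsep⟩,
          (one_smul _ _).symm⟩
      | one =>
        intro h hsep
        exact absurd rfl (by rwa [one_smul] at hsep)
      | mul g₁ g₂ hg₁ hg₂ ih₁ ih₂ =>
        intro h hsep
        by_cases hc : X.Sep h x₀ (g₁ • x₀)
        · exact ih₁ h hc
        · have hmid : X.Sep (g₁⁻¹ • h) x₀ (g₂ • x₀) := by
            apply (compat g₁ (g₁⁻¹ • h) x₀ (g₂ • x₀)).mp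
            rw [smul_inv_smul, smul_smul]
            intro hs
            exact hsep (by rw [not_ne_iff.mp hc, hs])
          obtain ⟨g', h₀, hmem, heq⟩ := ih₂ (g₁⁻¹ • h) hmid
          exact ⟨g₁ * g', h₀, hmem, by rw [← smul_smul, ← heq, smul_inv_smul]⟩
      | inv g hg ih =>
        intro h hsep
        have : X.Sep (g • h) x₀ (g • x₀) := by
          have := (compat g h x₀ (g⁻¹ • x₀)).mpr hsep
          rw [smul_inv_smul] at this
          exact this.symm
        obtain ⟨g', h₀, hmem, heq⟩ := ih (g • h) this
        exact ⟨g⁻¹ * g', h₀, hmem, by rw [← smul_smul, ← heq, inv_smul_smul]⟩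
    rintro h ⟨g₁, g₂, hsep⟩
    have hmid : X.Sep (g₁⁻¹ • h) x₀ ((g₁⁻¹ * g₂) • x₀) := by
      apply (compat g₁ (g₁⁻¹ • h) x₀ ((g₁⁻¹ * g₂) • x₀)).mp
      rw [smul_inv_smul, smul_smul, mul_inv_cancel_left]
      exact hsep
    obtain ⟨g', h₀, hmem, heq⟩ := key (g₁⁻¹ * g₂) (g₁⁻¹ • h) hmid
    exact ⟨g₁ * g', h₀, hmem, by rw [← smul_smul, ← heq, smul_inv_smul]⟩
end

section
/- Let X be a CAT(0) cube complex of finite diameter with respect to d∞. For a halfspace D delimited by hyperplane J define its depth p(D) = max{ d∞(x, N(J)) : x ∈ D }. Call a hyperplane unbalanced if its two halfspaces have different depths, and for an unbalanced J let J⁺ be the deeper halfspace. Then for any two unbalanced hyperplanes J₁, J₂, the halfspaces J₁⁺ and J₂⁺ intersect. -/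
/-!
Suppose the deeper halfspaces `h₁⁺`, `h₂⁺` were disjoint (so `h₁ ≠ h₂`). Every edge dual to
`h₂` has an endpoint in `h₂⁺`, hence in `h₁⁻`, and does not cross `h₁`; so the carrier `N(h₂)`
lies in `h₁⁻`. Take `x ∈ h₁⁺` realising the depth of `h₁⁺`; then `x ∈ h₂⁻`. On the way from `x`
to its nearest point `w` of `N(h₂)` one meets `N(h₁)` at a vertex `u` with
`sep(x, u) ⊆ sep(x, w)`, so `p(h₁⁺) = d∞(x, N(h₁)) ≤ d∞(x, N(h₂)) ≤ p(h₂⁻) < p(h₂⁺)`.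
By symmetry also `p(h₂⁺) < p(h₁⁺)`, a contradiction.
-/

namespace CubeCpx

variable (X : CubeCpx)

section Sep

variable {X}

lemma Sep.symm {h : X.H} {x y : X.V} (hxy : X.Sep h x y) : X.Sep h y x :=
  Ne.symm hxy

lemma Sep.sep_or_sep {h : X.H} {x y : X.V} (hxy : X.Sep h x y) (z : X.V) :
    X.Sep h x z ∨ X.Sep h z y := by
  by_contra! hs
  exact hxy ((not_not.1 hs.1).trans (not_not.1 hs.2))

end Sep

lemma exists_side (h : X.H) : ∀ b : Bool, ∃ v, X.side h v = b
  | true => (X.exists_both h).1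
  | false => (X.exists_both h).2

lemma dist_lt_dist_of_ssubset {x y z : X.V}
    (hss : {h | X.side h z ≠ X.side h y} ⊂ {h | X.side h x ≠ X.side h y}) :
    X.dist z y < X.dist x y :=
  Finset.card_lt_card (Set.Finite.toFinset_ssubset_toFinset.2 hss)

theorem exists_inCarrier_sep_subset {h : X.H} {x y : X.V} (hxy : X.Sep h x y) :
    ∃ u, X.InCarrier h u ∧ ∀ s, X.Sep s x u → X.Sep s x y := by
  obtain ⟨z, ⟨k, hxz : X.Sep k x z, hk⟩, hss⟩ := X.descent x y fun e => hxy (e ▸ rfl)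
  by_cases hkh : k = h
  · subst hkh
    exact ⟨x, ⟨z, ⟨k, hxz, hk⟩, hxz⟩, fun s hs => absurd rfl hs⟩
  have hkxy : X.Sep k x y := by
    by_contra hn
    exact hn (hss.1 ((hxz.sep_or_sep y).resolve_left hn).symm)
  have hzy : X.Sep h z y := (hxy.sep_or_sep z).resolve_left fun hc => hkh (hk h hc).symm
  obtain ⟨u, hu, hsub⟩ := exists_inCarrier_sep_subset hzy
  refine ⟨u, hu, fun s hs => ?_⟩
  rcases hs.sep_or_sep z with hsxz | hszu
  · exact hk s hsxz ▸ hkxy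
  · exact hss.1 (hsub s hszu)
termination_by X.dist x y
decreasing_by exact X.dist_lt_dist_of_ssubset hss

lemma exists_inCarrier (h : X.H) : ∃ u, X.InCarrier h u := by
  obtain ⟨v, hv⟩ := X.exists_side h true
  obtain ⟨v', hv'⟩ := X.exists_side h false
  obtain ⟨u, hu, -⟩ := X.exists_inCarrier_sep_subset (h := h) (x := v) (y := v')
    (by simp [Sep, hv, hv'])
  exact ⟨u, hu⟩

lemma side_eq_of_adjV {h h' : X.H} {u w : X.V} (hadj : X.AdjV u w) (hsep : X.Sep h u w)
    (hne : h' ≠ h) : X.side h' u = X.side h' w := by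
  obtain ⟨k, -, hk⟩ := hadj
  by_contra hs
  exact hne ((hk h' hs).trans (hk h hsep).symm)

lemma side_ne_of_inCarrier {h₁ h₂ : X.H} {b₁ b₂ : Bool} (hne : h₁ ≠ h₂)
    (hdisj : ∀ v, X.side h₁ v = b₁ → X.side h₂ v ≠ b₂) {u : X.V} (hu : X.InCarrier h₂ u) :
    X.side h₁ u ≠ b₁ := by
  obtain ⟨w, hadj, hsep⟩ := hu
  intro hu₁
  have hw₁ : X.side h₁ w = b₁ := X.side_eq_of_adjV hadj hsep hne ▸ hu₁
  exact hsep ((Bool.eq_not.2 (hdisj u hu₁)).trans (Bool.eq_not.2 (hdisj w hw₁)).symm)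

lemma dInf_bddAbove (x y : X.V) :
    BddAbove {n | ∃ S : Finset X.H, S.card = n ∧ (∀ h ∈ S, X.Sep h x y) ∧
      (S : Set X.H).Pairwise fun a b => ¬ X.Transverse a b} := by
  refine ⟨(X.sep_finite x y).toFinset.card, ?_⟩
  rintro n ⟨S, rfl, hS, -⟩
  exact Finset.card_le_card fun h hh => (Set.Finite.mem_toFinset _).2 (hS h hh)

lemma exists_finset_card_eq_dInf (x y : X.V) :
    ∃ S : Finset X.H, S.card = X.dInf x y ∧ (∀ h ∈ S, X.Sep h x y) ∧
      (S : Set X.H).Pairwise fun a b => ¬ X.Transverse a b :=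
  Nat.sSup_mem (s := {n | ∃ S : Finset X.H, S.card = n ∧ (∀ h ∈ S, X.Sep h x y) ∧
    (S : Set X.H).Pairwise fun a b => ¬ X.Transverse a b}) ⟨0, ∅, by simp⟩ (X.dInf_bddAbove x y)

lemma dInf_le_dInf {x u w : X.V} (hsub : ∀ s, X.Sep s x u → X.Sep s x w) :
    X.dInf x u ≤ X.dInf x w := by
  obtain ⟨S, hcard, hS, hpw⟩ := X.exists_finset_card_eq_dInf x u
  exact le_csSup (X.dInf_bddAbove x w) ⟨S, hcard, fun h hh => hsub h (hS h hh), hpw⟩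

lemma exists_dToCarrier_eq (h : X.H) (x : X.V) :
    ∃ w, X.InCarrier h w ∧ X.dInf x w = X.dToCarrier h x := by
  obtain ⟨u, hu⟩ := X.exists_inCarrier h
  exact Nat.sInf_mem (s := {n | ∃ w, X.InCarrier h w ∧ X.dInf x w = n}) ⟨_, u, hu, rfl⟩

lemma dToCarrier_le_dInf {h : X.H} {x u : X.V} (hu : X.InCarrier h u) :
    X.dToCarrier h x ≤ X.dInf x u :=
  Nat.sInf_le ⟨u, hu, rfl⟩

theorem dToCarrier_le_dToCarrier {h h' : X.H} {x : X.V}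
    (hsep : ∀ w, X.InCarrier h' w → X.Sep h x w) :
    X.dToCarrier h x ≤ X.dToCarrier h' x := by
  obtain ⟨w, hw, hxw⟩ := X.exists_dToCarrier_eq h' x
  obtain ⟨u, hu, hsub⟩ := X.exists_inCarrier_sep_subset (hsep w hw)
  calc X.dToCarrier h x ≤ X.dInf x u := X.dToCarrier_le_dInf hu
    _ ≤ X.dInf x w := X.dInf_le_dInf hsub
    _ = X.dToCarrier h' x := hxw

section BoundedDInf

variable {X} {N : ℕ} (hN : ∀ x y : X.V, X.dInf x y ≤ N)
include hN

lemma depth_bddAbove (h : X.H) (b : Bool) :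
    BddAbove {n | ∃ v, X.side h v = b ∧ X.dToCarrier h v = n} := by
  obtain ⟨u, hu⟩ := X.exists_inCarrier h
  refine ⟨N, ?_⟩
  rintro n ⟨v, -, rfl⟩
  exact (X.dToCarrier_le_dInf hu).trans (hN v u)

lemma exists_dToCarrier_eq_depth (h : X.H) (b : Bool) :
    ∃ v, X.side h v = b ∧ X.dToCarrier h v = X.depth h b := by
  obtain ⟨v, hv⟩ := X.exists_side h b
  exact Nat.sSup_mem (s := {n | ∃ v, X.side h v = b ∧ X.dToCarrier h v = n}) ⟨_, v, hv, rfl⟩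
    (depth_bddAbove hN h b)

lemma dToCarrier_le_depth {h : X.H} {v : X.V} {b : Bool} (hv : X.side h v = b) :
    X.dToCarrier h v ≤ X.depth h b :=
  le_csSup (depth_bddAbove hN h b) ⟨v, hv, rfl⟩

theorem depth_lt_depth_of_disjoint {h₁ h₂ : X.H} {b₁ b₂ : Bool} (hne : h₁ ≠ h₂)
    (hdisj : ∀ v, X.side h₁ v = b₁ → X.side h₂ v ≠ b₂)
    (h₂unb : X.depth h₂ (!b₂) < X.depth h₂ b₂) :
    X.depth h₁ b₁ < X.depth h₂ b₂ := by
  obtain ⟨x, hx, hxd⟩ := exists_dToCarrier_eq_depth hN h₁ b₁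
  have hcarrier : ∀ w, X.InCarrier h₂ w → X.Sep h₁ x w := fun w hw => by
    rw [Sep, hx]
    exact (X.side_ne_of_inCarrier hne hdisj hw).symm
  calc X.depth h₁ b₁ = X.dToCarrier h₁ x := hxd.symm
    _ ≤ X.dToCarrier h₂ x := X.dToCarrier_le_dToCarrier hcarrier
    _ ≤ X.depth h₂ (!b₂) := dToCarrier_le_depth hN (Bool.eq_not.2 (hdisj x hx))
    _ < X.depth h₂ b₂ := h₂unb

end BoundedDInf

end CubeCpx

/-- Let `X` be a CAT(0) cube complex of finite diameter with respect to `d∞`.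
If `h₁`, `h₂` are unbalanced hyperplanes (each with a strictly deeper side `b₁`, `b₂`),
then the deeper halfspaces `h₁⁺` and `h₂⁺` intersect. -/
theorem deeper_halfspaces_intersect (X : CubeCpx)
    (hbd : ∃ N : ℕ, ∀ x y : X.V, X.dInf x y ≤ N)
    (h₁ h₂ : X.H) (b₁ b₂ : Bool)
    (h1unb : X.depth h₁ (!b₁) < X.depth h₁ b₁)
    (h2unb : X.depth h₂ (!b₂) < X.depth h₂ b₂) :
    ∃ v : X.V, X.side h₁ v = b₁ ∧ X.side h₂ v = b₂ := by
  by_contra! hdisj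
  by_cases hne : h₁ = h₂
  · subst hne
    obtain ⟨v, hv⟩ := X.exists_side h₁ b₁
    have hb₂ : b₂ = !b₁ := hv ▸ Bool.eq_not.2 (hdisj v hv).symm
    rw [hb₂, Bool.not_not] at h2unb
    exact lt_asymm h1unb h2unb
  obtain ⟨N, hN⟩ := hbd
  exact lt_asymm (X.depth_lt_depth_of_disjoint hN hne hdisj h2unb)
    (X.depth_lt_depth_of_disjoint hN (Ne.symm hne) (fun v hv₂ hv₁ => hdisj v hv₁ hv₂) h1unb)
end

section
/- In the cube complex 𝒞 of the Neretin group 𝒩_d, every vertex of height h has exactly h neighbours of higher height, and at most h! neighbours of lower height; in particular 𝒞 is locally finite. -/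
/-! Vertices of the rooted `d`-regular tree `𝒯_d` are finite words over `Fin d`; its boundary
`∂𝒯_d` is the set of infinite words `ℕ → Fin d`. -/

/-- Prepend the finite word `w` to the infinite word `x`. -/
def prepend (d : ℕ) (w : List (Fin d)) (x : ℕ → Fin d) : ℕ → Fin d :=
  fun n => if h : n < w.length then w.get ⟨n, h⟩ else x (n - w.length)

/-- The cylinder (ball of the boundary) determined by the vertex `w`. -/
def Cyl (d : ℕ) (w : List (Fin d)) : Set (ℕ → Fin d) :=
  {x | ∃ y, x = prepend d w y}

/-- `L` is a complete antichain: every boundary point lies in exactly one cylinder `Cyl w`,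
`w ∈ L`. (Complete antichains are exactly the leaf sets of admissible subtrees.) -/
def CompleteAntichain (d : ℕ) (L : Finset (List (Fin d))) : Prop :=
  ∀ x : ℕ → Fin d, ∃! w, w ∈ L ∧ x ∈ Cyl d w

/-- `g` is an almost automorphism of `𝒯_d`: a forest isomorphism
`𝒯_d ∖ S → 𝒯_d ∖ S'`, acting on the boundary by replacing the prefix `w ∈ L` (the leaves of
`S`, a complete antichain) by `b w` (the leaves of `S'`). -/
def IsAA (d : ℕ) (g : (ℕ → Fin d) ≃ (ℕ → Fin d)) : Prop :=
  ∃ (L L' : Finset (List (Fin d))) (b : List (Fin d) → List (Fin d)),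
    CompleteAntichain d L ∧ CompleteAntichain d L' ∧
    Set.BijOn b (↑L) (↑L') ∧
    ∀ w ∈ L, ∀ y, g (prepend d w y) = prepend d (b w) y

/-- The set of the `d` children of the vertex `w`. -/
def childrenF (d : ℕ) (w : List (Fin d)) : Finset (List (Fin d)) :=
  Finset.univ.image (fun i : Fin d => w ++ [i])

/-- `T` is an admissible subtree of `𝒯_d`: a finite subtree containing the root, closed under
prefixes, in which every non-leaf vertex has all of its `d` children. -/
def Admissible (d : ℕ) (T : Finset (List (Fin d))) : Prop :=
  [] ∈ T ∧ (∀ w ∈ T, ∀ p : List (Fin d), p <+: w → p ∈ T) ∧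
    ∀ w ∈ T, ∀ i : Fin d, w ++ [i] ∈ T ∨ ∀ j : Fin d, w ++ [j] ∉ T

/-- The leaves of the subtree `T`. -/
def leavesF (d : ℕ) (T : Finset (List (Fin d))) : Finset (List (Fin d)) :=
  T.filter (fun w => ∀ i : Fin d, w ++ [i] ∉ T)

/-- A forest isomorphism `𝒯 ∖ S → 𝒯 ∖ R` (given on boundaries): a prefix replacement along a
bijection between the leaves of `S` and the leaves of `R`. -/
def FIso (d : ℕ) (g : (ℕ → Fin d) ≃ (ℕ → Fin d))
    (S R : Finset (List (Fin d))) : Prop :=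
  ∃ b : List (Fin d) → List (Fin d),
    Set.BijOn b (↑(leavesF d S)) (↑(leavesF d R)) ∧
    ∀ w ∈ leavesF d S, ∀ y, g (prepend d w y) = prepend d (b w) y

/-- Pairs `(T, φ)` of a subtree and a boundary transformation. -/
abbrev VPair (d : ℕ) := Finset (List (Fin d)) × ((ℕ → Fin d) ≃ (ℕ → Fin d))

/-- The defining relation of the vertex set of the Neretin cube complex `𝒞`:
`(R, μ) ∼ (S, ν)` iff both trees are admissible, both transformations are almost
automorphisms, and `μ⁻¹ ∘ ν` is a forest isomorphism `𝒯 ∖ S → 𝒯 ∖ R`. -/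
def VRel (d : ℕ) (p q : VPair d) : Prop :=
  Admissible d p.1 ∧ Admissible d q.1 ∧ IsAA d p.2 ∧ IsAA d q.2 ∧
    FIso d (q.2.trans p.2.symm) q.1 p.1

/-- Vertices of the Neretin cube complex `𝒞`: classes `[T, φ]`. -/
def CVert (d : ℕ) := Quot (VRel d)

/-- The class `[T, φ]`. -/
def mkV (d : ℕ) (p : VPair d) : CVert d := Quot.mk _ p

/-- The vertex `v` of `𝒞` has height `h`: it has a representative `[T, φ]` where the
admissible tree `T` has exactly `h` leaves. -/
def HeightIs (d : ℕ) (v : CVert d) (h : ℕ) : Prop :=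
  ∃ (T : Finset (List (Fin d))) (φ : (ℕ → Fin d) ≃ (ℕ → Fin d)),
    Admissible d T ∧ IsAA d φ ∧ v = mkV d (T, φ) ∧ (leavesF d T).card = h

/-- Adjacency in `𝒞`: edges connect `[T, φ]` and `[T ∪ c(u), φ]` for `u` a leaf of `T`. -/
def AdjC (d : ℕ) (v w : CVert d) : Prop :=
  ∃ (T : Finset (List (Fin d))) (φ : (ℕ → Fin d) ≃ (ℕ → Fin d)) (u : List (Fin d)),
    Admissible d T ∧ IsAA d φ ∧ u ∈ leavesF d T ∧
      ((v = mkV d (T, φ) ∧ w = mkV d (T ∪ childrenF d u, φ)) ∨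
        (w = mkV d (T, φ) ∧ v = mkV d (T ∪ childrenF d u, φ)))

/-! Forest isomorphisms biject leaves, so the height is well defined, and an edge changes it by
`d - 1 ≠ 0`; hence every neighbour lies strictly above or strictly below.

Going up from `[T, φ]`, a neighbour `[T' ∪ c(u'), φ']` with `[T', φ'] = [T, φ]` equals
`[T ∪ c(u), φ]` for `u` the leaf of `T` matched with `u'`: extend the leaf bijection by
`u' ++ [i] ↦ u ++ [i]`. Different leaves `u` give different vertices because `d ≥ 2` makes
`prepend` injective in the finite word, so equivalent pairs with the same `φ` have the same leaves.

Going down, a neighbour `[T', φ']` with `[T' ∪ c(u'), φ'] = [T, φ]` is determined by the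
injective tuple `i ↦ b (u' ++ [i])` of leaves of `T`: two neighbours with the same tuple are
related by a leaf bijection sending `c(u₂)` to `c(u₁)` childwise, which contracts to a forest
isomorphism of the smaller trees. So there are at most `h! / (h - d)! ≤ h!` of them. -/

theorem Set.BijOn.union_of_disjoint {α β : Type*} {f : α → β} {s₁ s₂ : Set α} {t₁ t₂ : Set β}
    (h₁ : Set.BijOn f s₁ t₁) (h₂ : Set.BijOn f s₂ t₂) (ht : Disjoint t₁ t₂) :
    Set.BijOn f (s₁ ∪ s₂) (t₁ ∪ t₂) := by
  refine h₁.union h₂ ?_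
  rintro x (hx | hx) y (hy | hy) hxy
  · exact h₁.injOn hx hy hxy
  · exact (ht.ne_of_mem (h₁.mapsTo hx) (h₂.mapsTo hy) hxy).elim
  · exact (ht.ne_of_mem (h₁.mapsTo hy) (h₂.mapsTo hx) hxy.symm).elim
  · exact h₂.injOn hx hy hxy

theorem Set.BijOn.of_union_left {α β : Type*} {f : α → β} {s₁ s₂ : Set α} {t₁ t₂ : Set β}
    (h : Set.BijOn f (s₁ ∪ s₂) (t₁ ∪ t₂)) (h₂ : Set.BijOn f s₂ t₂) (hs : Disjoint s₁ s₂)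
    (ht : Disjoint t₁ t₂) : Set.BijOn f s₁ t₁ := by
  refine ⟨fun x hx => ?_, h.injOn.mono Set.subset_union_left, fun y hy => ?_⟩
  · rcases h.mapsTo (Or.inl hx) with hfx | hfx
    · exact hfx
    · obtain ⟨x', hx', hfx'⟩ := h₂.surjOn hfx
      cases h.injOn (Or.inr hx') (Or.inl hx) hfx'
      exact (hs.ne_of_mem hx hx' rfl).elim
  · obtain ⟨x, hx | hx, rfl⟩ := h.surjOn (Or.inl hy)
    · exact ⟨x, hx, rfl⟩
    · exact (ht.ne_of_mem hy (h₂.mapsTo hx) rfl).elim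

theorem Nat.descFactorial_le_factorial (n k : ℕ) : n.descFactorial k ≤ n.factorial := by
  rcases le_or_gt k n with hkn | hnk
  · rw [← Nat.factorial_mul_descFactorial hkn]
    exact Nat.le_mul_of_pos_left _ (Nat.factorial_pos _)
  · simp [Nat.descFactorial_eq_zero_iff_lt.2 hnk]

theorem exists_injective_of_forall_exists_rel {α β : Type*} {s : Set α} {r : α → β → Prop}
    (hex : ∀ a ∈ s, ∃ b, r a b) (huniq : ∀ a₁ a₂ b, r a₁ b → r a₂ b → a₁ = a₂) :
    ∃ f : s → β, Function.Injective f := by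
  choose f hf using hex
  refine ⟨fun a => f a a.2, fun a₁ a₂ h => Subtype.ext (huniq _ _ (f a₂ a₂.2) ?_ (hf a₂ a₂.2))⟩
  exact (show f a₁ a₁.2 = f a₂ a₂.2 from h) ▸ hf a₁ a₁.2

section Boundary

variable {d : ℕ}

theorem prepend_append (w w' : List (Fin d)) (y : ℕ → Fin d) :
    prepend d (w ++ w') y = prepend d w (prepend d w' y) := by
  funext n
  simp only [prepend, List.get_eq_getElem, List.length_append, List.getElem_append]
  split_ifs <;> first | rfl | omega | (congr 1; omega)

theorem prepend_head_tail (y : ℕ → Fin d) : prepend d [y 0] (fun n => y (n + 1)) = y := by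
  funext n
  cases n <;> simp [prepend]

theorem prepend_eq_prepend_append_head (w : List (Fin d)) (y : ℕ → Fin d) :
    prepend d w y = prepend d (w ++ [y 0]) (fun n => y (n + 1)) := by
  rw [prepend_append, prepend_head_tail]

theorem length_le_of_forall_prepend_eq (hd : 2 ≤ d) {w w' : List (Fin d)}
    (h : ∀ y, prepend d w y = prepend d w' y) : w'.length ≤ w.length := by
  by_contra! hlt
  obtain ⟨j, hj⟩ :=
    Fintype.exists_ne_of_one_lt_card (by rw [Fintype.card_fin]; omega) w'[w.length]
  have := congrFun (h fun _ => j) w.length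
  simp [prepend, hlt] at this
  exact hj this

theorem eq_of_forall_prepend_eq (hd : 2 ≤ d) {w w' : List (Fin d)}
    (h : ∀ y, prepend d w y = prepend d w' y) : w = w' := by
  have hlen := le_antisymm (length_le_of_forall_prepend_eq hd fun y => (h y).symm)
    (length_le_of_forall_prepend_eq hd h)
  refine List.ext_getElem hlen fun n hn hn' => ?_
  simpa [prepend, hn, hn'] using congrFun (h fun _ => ⟨0, by omega⟩) n

end Boundary

section Trees

variable {d : ℕ} {T : Finset (List (Fin d))} {u w : List (Fin d)}

theorem mem_leavesF : w ∈ leavesF d T ↔ w ∈ T ∧ ∀ i, w ++ [i] ∉ T :=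
  Finset.mem_filter

theorem mem_childrenF : w ∈ childrenF d u ↔ ∃ i, u ++ [i] = w := by
  simp [childrenF]

theorem append_singleton_mem_childrenF {i : Fin d} : w ++ [i] ∈ childrenF d u ↔ w = u := by
  simp [childrenF, eq_comm]

theorem card_childrenF : (childrenF d u).card = d := by
  rw [childrenF, Finset.card_image_of_injective _ fun i j h => by simpa using h]
  simp

theorem append_singleton_notMem_of_mem_leavesF (hu : u ∈ leavesF d T) (i : Fin d) :
    u ++ [i] ∉ T :=
  (mem_leavesF.1 hu).2 i

theorem notMem_of_mem_childrenF (hT : Admissible d T) (hu : u ∈ leavesF d T)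
    (hw : w ∈ childrenF d u) : w ∉ T ∧ ∀ i, w ++ [i] ∉ T := by
  obtain ⟨k, rfl⟩ := mem_childrenF.1 hw
  have hk := append_singleton_notMem_of_mem_leavesF hu k
  exact ⟨hk, fun i hi => hk (hT.2.1 _ hi _ (List.prefix_append _ _))⟩

theorem admissible_union_childrenF (hT : Admissible d T) (hu : u ∈ leavesF d T) :
    Admissible d (T ∪ childrenF d u) := by
  refine ⟨Finset.mem_union_left _ hT.1, ?_, ?_⟩
  · intro w hw p hp
    rcases Finset.mem_union.1 hw with hw | hw
    · exact Finset.mem_union_left _ (hT.2.1 w hw p hp)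
    · obtain ⟨i, rfl⟩ := mem_childrenF.1 hw
      rcases List.prefix_concat_iff.1 hp with rfl | hp
      · exact Finset.mem_union_right _ hw
      · exact Finset.mem_union_left _ (hT.2.1 u (mem_leavesF.1 hu).1 p hp)
  · intro w hw i
    simp only [Finset.mem_union, append_singleton_mem_childrenF]
    by_cases hwu : w = u
    · exact Or.inl (Or.inr hwu)
    rcases Finset.mem_union.1 hw with hw | hw
    · simpa [hwu] using hT.2.2 w hw i
    · exact Or.inr fun j hj => hj.elim ((notMem_of_mem_childrenF hT hu hw).2 j) hwu

theorem leavesF_union_childrenF (h0 : 0 < d) (hT : Admissible d T) (hu : u ∈ leavesF d T) :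
    leavesF d (T ∪ childrenF d u) = (leavesF d T).erase u ∪ childrenF d u := by
  ext w
  simp only [mem_leavesF, Finset.mem_union, Finset.mem_erase, append_singleton_mem_childrenF,
    not_or]
  constructor
  · rintro ⟨hw | hw, hleaf⟩
    · exact Or.inl ⟨(hleaf ⟨0, h0⟩).2, hw, fun i => (hleaf i).1⟩
    · exact Or.inr hw
  · rintro (⟨hwu, hw, hleaf⟩ | hw)
    · exact ⟨Or.inl hw, fun i => ⟨hleaf i, hwu⟩⟩
    · refine ⟨Or.inr hw, fun i => ⟨(notMem_of_mem_childrenF hT hu hw).2 i, ?_⟩⟩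
      rintro rfl
      exact (notMem_of_mem_childrenF hT hu hw).1 (mem_leavesF.1 hu).1

theorem disjoint_erase_childrenF (hu : u ∈ leavesF d T) :
    Disjoint ((leavesF d T).erase u) (childrenF d u) := by
  refine Finset.disjoint_right.2 fun w hw hw' => ?_
  obtain ⟨k, rfl⟩ := mem_childrenF.1 hw
  exact append_singleton_notMem_of_mem_leavesF hu k
    (mem_leavesF.1 (Finset.mem_of_mem_erase hw')).1

theorem card_leavesF_union_childrenF (h0 : 0 < d) (hT : Admissible d T)
    (hu : u ∈ leavesF d T) :
    (leavesF d (T ∪ childrenF d u)).card + 1 = (leavesF d T).card + d := by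
  rw [leavesF_union_childrenF h0 hT hu, Finset.card_union_of_disjoint
    (disjoint_erase_childrenF hu), card_childrenF, add_right_comm,
    Finset.card_erase_add_one hu]

theorem append_singleton_mem_leavesF_union_childrenF (h0 : 0 < d) (hT : Admissible d T)
    (hu : u ∈ leavesF d T) (i : Fin d) : u ++ [i] ∈ leavesF d (T ∪ childrenF d u) := by
  rw [leavesF_union_childrenF h0 hT hu]
  exact Finset.mem_union_right _ (mem_childrenF.2 ⟨i, rfl⟩)

theorem eq_of_leavesF_union_childrenF_eq (h0 : 0 < d) (hT : Admissible d T)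
    {u' : List (Fin d)} (hu : u ∈ leavesF d T) (hu' : u' ∈ leavesF d T)
    (h : leavesF d (T ∪ childrenF d u) = leavesF d (T ∪ childrenF d u')) : u = u' := by
  have hmem := append_singleton_mem_leavesF_union_childrenF h0 hT hu ⟨0, h0⟩
  rw [h, leavesF_union_childrenF h0 hT hu'] at hmem
  rcases Finset.mem_union.1 hmem with hmem | hmem
  · exact absurd (mem_leavesF.1 (Finset.mem_of_mem_erase hmem)).1
      (append_singleton_notMem_of_mem_leavesF hu _)
  · exact append_singleton_mem_childrenF.1 hmem

end Trees

section ForestIsomorphisms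

variable {d : ℕ} {S R Q : Finset (List (Fin d))} {g g' : (ℕ → Fin d) ≃ (ℕ → Fin d)}
  {b b' : List (Fin d) → List (Fin d)} {u v : List (Fin d)}

def FIsoVia (d : ℕ) (g : (ℕ → Fin d) ≃ (ℕ → Fin d)) (S R : Finset (List (Fin d)))
    (b : List (Fin d) → List (Fin d)) : Prop :=
  Set.BijOn b ↑(leavesF d S) ↑(leavesF d R) ∧
    ∀ w ∈ leavesF d S, ∀ y, g (prepend d w y) = prepend d (b w) y

theorem FIsoVia.refl (S : Finset (List (Fin d))) : FIsoVia d (Equiv.refl _) S S id :=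
  ⟨Set.bijOn_id _, fun _ _ _ => rfl⟩

theorem FIsoVia.symm (h : FIsoVia d g S R b) :
    FIsoVia d g.symm R S (Function.invFunOn b ↑(leavesF d S)) := by
  have hinv := h.1.invOn_invFunOn
  refine ⟨h.1.symm hinv.symm, fun w hw y => ?_⟩
  rw [Equiv.symm_apply_eq, h.2 _ (h.1.symm hinv.symm |>.mapsTo hw), hinv.2 hw]

theorem FIsoVia.trans (h : FIsoVia d g S R b) (h' : FIsoVia d g' R Q b') :
    FIsoVia d (g.trans g') S Q (b' ∘ b) :=
  ⟨h'.1.comp h.1, fun w hw y => by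
    rw [Equiv.trans_apply, h.2 w hw, h'.2 _ (h.1.mapsTo hw), Function.comp_apply]⟩

theorem FIsoVia.card_leavesF_eq (h : FIsoVia d g S R b) :
    (leavesF d S).card = (leavesF d R).card :=
  Finset.card_nbij b h.1.mapsTo h.1.injOn h.1.surjOn

theorem FIsoVia.leavesF_eq_of_refl (hd : 2 ≤ d) (h : FIsoVia d (Equiv.refl _) S R b) :
    leavesF d S = leavesF d R := by
  have hid : Set.EqOn b id ↑(leavesF d S) := fun w hw =>
    (eq_of_forall_prepend_eq hd (h.2 w hw)).symm
  have := (h.1.congr hid).image_eq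
  rw [Set.image_id] at this
  exact_mod_cast this

theorem bijOn_childrenF (hb : ∀ i, b (u ++ [i]) = v ++ [i]) :
    Set.BijOn b ↑(childrenF d u) ↑(childrenF d v) := by
  refine ⟨?_, ?_, ?_⟩
  · rintro _ hw
    obtain ⟨i, rfl⟩ := mem_childrenF.1 hw
    exact mem_childrenF.2 ⟨i, (hb i).symm⟩
  · rintro _ hw _ hw' heq
    obtain ⟨i, rfl⟩ := mem_childrenF.1 hw
    obtain ⟨j, rfl⟩ := mem_childrenF.1 hw'
    rw [hb, hb] at heq
    simpa using heq
  · rintro _ hw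
    obtain ⟨i, rfl⟩ := mem_childrenF.1 hw
    exact ⟨u ++ [i], mem_childrenF.2 ⟨i, rfl⟩, hb i⟩

theorem FIsoVia.union_childrenF (h0 : 0 < d) (hS : Admissible d S) (hR : Admissible d R)
    (h : FIsoVia d g S R b) (hu : u ∈ leavesF d S) :
    FIsoVia d g (S ∪ childrenF d u) (R ∪ childrenF d (b u))
      (fun w => if w ∈ S then b w else b u ++ w.drop u.length) := by
  have hbu : b u ∈ leavesF d R := h.1.mapsTo hu
  have hchild := append_singleton_notMem_of_mem_leavesF hu
  refine ⟨?_, fun w hw y => ?_⟩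
  · rw [leavesF_union_childrenF h0 hS hu, leavesF_union_childrenF h0 hR hbu]
    push_cast
    refine Set.BijOn.union_of_disjoint ((h.1.sdiff_singleton hu).congr fun w hw => ?_)
      (bijOn_childrenF fun i => by simp [hchild i])
      (by exact_mod_cast disjoint_erase_childrenF hbu)
    simp [(mem_leavesF.1 hw.1).1]
  · rw [leavesF_union_childrenF h0 hS hu] at hw
    dsimp only
    rcases Finset.mem_union.1 hw with hw | hw
    · have hwS := Finset.mem_of_mem_erase hw
      rw [if_pos (mem_leavesF.1 hwS).1]
      exact h.2 w hwS y
    · obtain ⟨i, rfl⟩ := mem_childrenF.1 hw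
      rw [if_neg (hchild i), List.drop_left, prepend_append, prepend_append]
      exact h.2 u hu _

theorem FIsoVia.of_union_childrenF (h0 : 0 < d) (hS : Admissible d S) (hR : Admissible d R)
    (hu : u ∈ leavesF d S) (hv : v ∈ leavesF d R)
    (h : FIsoVia d g (S ∪ childrenF d u) (R ∪ childrenF d v) b)
    (hb : ∀ i, b (u ++ [i]) = v ++ [i]) :
    FIsoVia d g S R (fun w => if w = u then v else b w) := by
  have hL := leavesF_union_childrenF h0 hS hu
  refine ⟨?_, fun w hw y => ?_⟩
  · have hrest : Set.BijOn b (↑(leavesF d S) \ {u}) (↑(leavesF d R) \ {v}) := by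
      have hbij := h.1
      rw [hL, leavesF_union_childrenF h0 hR hv] at hbij
      push_cast at hbij
      exact hbij.of_union_left (bijOn_childrenF hb)
        (by exact_mod_cast disjoint_erase_childrenF hu)
        (by exact_mod_cast disjoint_erase_childrenF hv)
    have hbij := (hrest.congr (f₂ := fun w => if w = u then v else b w)
      fun w hw => (if_neg hw.2).symm).insert (a := u) (by simp)
    rwa [if_pos rfl, Set.insert_sdiff_singleton, Set.insert_eq_of_mem (by exact_mod_cast hu),
      Set.insert_sdiff_singleton, Set.insert_eq_of_mem (by exact_mod_cast hv)] at hbij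
  · dsimp only
    by_cases hwu : w = u
    · subst hwu
      -- the cylinder of `w` is the union of the cylinders of its children
      rw [if_pos rfl, prepend_eq_prepend_append_head w, prepend_eq_prepend_append_head v,
        h.2 _ (append_singleton_mem_leavesF_union_childrenF h0 hS hu _), hb]
    · rw [if_neg hwu]
      exact h.2 w (hL ▸ Finset.mem_union_left _ (Finset.mem_erase.2 ⟨hwu, hw⟩)) y

end ForestIsomorphisms

section Vertices

variable {d : ℕ} {S R T T' : Finset (List (Fin d))} {φ φ' : (ℕ → Fin d) ≃ (ℕ → Fin d)}
  {u u' : List (Fin d)} {p q r : VPair d} {v w w₁ w₂ : CVert d}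

theorem vRel_self (hT : Admissible d T) (hφ : IsAA d φ) : VRel d (T, φ) (T, φ) := by
  refine ⟨hT, hT, hφ, hφ, id, ?_⟩
  rw [Equiv.self_trans_symm]
  exact FIsoVia.refl T

theorem VRel.symm (h : VRel d p q) : VRel d q p := by
  obtain ⟨hp, hq, hp', hq', b, hb⟩ := h
  refine ⟨hq, hp, hq', hp', Function.invFunOn b ↑(leavesF d q.1), ?_⟩
  have := FIsoVia.symm (b := b) hb
  rwa [Equiv.symm_trans, Equiv.symm_symm] at this

theorem VRel.trans (h₁ : VRel d p q) (h₂ : VRel d q r) : VRel d p r := by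
  obtain ⟨hp, -, hp', -, b₁, hb₁⟩ := h₁
  obtain ⟨-, hr, -, hr', b₂, hb₂⟩ := h₂
  have hg : (r.2.trans q.2.symm).trans (q.2.trans p.2.symm) = r.2.trans p.2.symm := by
    ext
    simp
  refine ⟨hp, hr, hp', hr', b₁ ∘ b₂, ?_⟩
  rw [← hg]
  exact FIsoVia.trans (b := b₂) hb₂ hb₁

/- `VRel` is a partial equivalence relation, reflexive exactly on the pairs with `T` admissible
and `φ` an almost automorphism. -/
theorem eq_or_vRel_of_eqvGen (h : Relation.EqvGen (VRel d) p q) : p = q ∨ VRel d p q := by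
  induction h with
  | rel _ _ h => exact .inr h
  | refl => exact .inl rfl
  | symm _ _ _ ih => exact ih.imp Eq.symm VRel.symm
  | trans _ _ _ _ _ ih₁ ih₂ =>
    rcases ih₁ with rfl | h₁
    · exact ih₂
    rcases ih₂ with rfl | h₂
    exacts [.inr h₁, .inr (h₁.trans h₂)]

theorem mkV_eq_mkV_iff (hq : VRel d q q) : mkV d p = mkV d q ↔ VRel d p q := by
  refine ⟨fun h => ?_, Quot.sound⟩
  rcases eq_or_vRel_of_eqvGen (Quot.eq.1 h) with rfl | h
  exacts [hq, h]

theorem leavesF_eq_of_mkV_eq_mkV (hd : 2 ≤ d) (h : mkV d (S, φ) = mkV d (R, φ)) :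
    leavesF d S = leavesF d R := by
  rcases eq_or_vRel_of_eqvGen (Quot.eq.1 h) with h | ⟨-, -, -, -, b, hb⟩
  · rw [(Prod.mk.inj h).1]
  · rw [Equiv.self_trans_symm] at hb
    exact (FIsoVia.leavesF_eq_of_refl (b := b) hd hb).symm

theorem VRel.union_childrenF (h0 : 0 < d) (h : VRel d (T, φ) (T', φ'))
    (hu' : u' ∈ leavesF d T') :
    ∃ u ∈ leavesF d T, VRel d (T ∪ childrenF d u, φ) (T' ∪ childrenF d u', φ') := by
  obtain ⟨hT, hT', hφ, hφ', b, hb⟩ := h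
  have hbu : b u' ∈ leavesF d T := hb.1.mapsTo hu'
  exact ⟨b u', hbu, admissible_union_childrenF hT hbu, admissible_union_childrenF hT' hu', hφ,
    hφ', _, FIsoVia.union_childrenF (b := b) h0 hT' hT hb hu'⟩

def CVert.height {d : ℕ} : CVert d → ℕ :=
  Quot.lift (fun p => (leavesF d p.1).card) fun _ _ ⟨_, _, _, _, b, h⟩ =>
    (FIsoVia.card_leavesF_eq (b := b) h).symm

theorem height_mkV (T : Finset (List (Fin d))) (φ : (ℕ → Fin d) ≃ (ℕ → Fin d)) :
    (mkV d (T, φ)).height = (leavesF d T).card :=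
  rfl

theorem HeightIs.height_eq {n : ℕ} (h : HeightIs d v n) : v.height = n := by
  obtain ⟨T, φ, -, -, rfl, rfl⟩ := h
  rfl

theorem height_mkV_union_childrenF (h0 : 0 < d) (hT : Admissible d T) (hu : u ∈ leavesF d T) :
    (mkV d (T ∪ childrenF d u, φ)).height + 1 = (mkV d (T, φ)).height + d :=
  card_leavesF_union_childrenF h0 hT hu

theorem AdjC.heightIs_height (h : AdjC d v w) : HeightIs d w w.height := by
  obtain ⟨T, φ, u, hT, hφ, hu, ⟨-, rfl⟩ | ⟨rfl, -⟩⟩ := h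
  exacts [⟨_, φ, admissible_union_childrenF hT hu, hφ, rfl, rfl⟩, ⟨T, φ, hT, hφ, rfl, rfl⟩]

theorem setOf_adjC_and_exists_heightIs (v : CVert d) (P : ℕ → Prop) :
    {w | AdjC d v w ∧ ∃ n, HeightIs d w n ∧ P n} = {w | AdjC d v w ∧ P w.height} := by
  ext w
  refine and_congr_right fun hw => ⟨?_, fun hP => ⟨_, hw.heightIs_height, hP⟩⟩
  rintro ⟨n, hn, hP⟩
  rwa [hn.height_eq]

theorem AdjC.height_cases (h0 : 0 < d) (h : AdjC d v w) :
    w.height + 1 = v.height + d ∨ v.height + 1 = w.height + d := by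
  obtain ⟨T, φ, u, hT, -, hu, ⟨rfl, rfl⟩ | ⟨rfl, rfl⟩⟩ := h
  exacts [.inl (height_mkV_union_childrenF h0 hT hu), .inr (height_mkV_union_childrenF h0 hT hu)]

theorem setOf_adjC_height_gt (hd : 2 ≤ d) (hT : Admissible d T) (hφ : IsAA d φ) :
    {w | AdjC d (mkV d (T, φ)) w ∧ (mkV d (T, φ)).height < w.height} =
      (fun u => mkV d (T ∪ childrenF d u, φ)) '' ↑(leavesF d T) := by
  ext w
  constructor
  · rintro ⟨⟨T', φ', u', hT', hφ', hu', ⟨hv, rfl⟩ | ⟨rfl, hv⟩⟩, hlt⟩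
    · obtain ⟨u, hu, hrel⟩ :=
        ((mkV_eq_mkV_iff (vRel_self hT' hφ')).1 hv).union_childrenF (by omega) hu'
      exact ⟨u, hu, Quot.sound hrel⟩
    · have := height_mkV_union_childrenF (φ := φ') (by omega) hT' hu'
      rw [← hv] at this
      omega
  · rintro ⟨u, hu, rfl⟩
    have := height_mkV_union_childrenF (φ := φ) (by omega) hT hu
    exact ⟨⟨T, φ, u, hT, hφ, hu, .inl ⟨rfl, rfl⟩⟩, by dsimp only; omega⟩

theorem injOn_mkV_union_childrenF (hd : 2 ≤ d) (hT : Admissible d T) :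
    Set.InjOn (fun u => mkV d (T ∪ childrenF d u, φ)) ↑(leavesF d T) := fun _ hu _ hu' h =>
  eq_of_leavesF_union_childrenF_eq (by omega) hT hu hu' (leavesF_eq_of_mkV_eq_mkV hd h)

/-- `w = [T', φ']` arises from `[T, φ]` by merging the leaves `c 0, …, c (d - 1)` of `T`
into the single leaf `u'` of `T'`. -/
def IsCollapse (d : ℕ) (T : Finset (List (Fin d))) (φ : (ℕ → Fin d) ≃ (ℕ → Fin d))
    (w : CVert d) (c : Fin d → List (Fin d)) : Prop :=
  ∃ T' φ' u' b, Admissible d T' ∧ IsAA d φ' ∧ u' ∈ leavesF d T' ∧ w = mkV d (T', φ') ∧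
    FIsoVia d (φ'.trans φ.symm) (T' ∪ childrenF d u') T b ∧ ∀ i, b (u' ++ [i]) = c i

theorem exists_isCollapse_of_adjC (hd : 2 ≤ d) (h : AdjC d (mkV d (T, φ)) w)
    (hlt : w.height < (mkV d (T, φ)).height) :
    ∃ c : Fin d ↪ leavesF d T, IsCollapse d T φ w fun i => c i := by
  obtain ⟨T', φ', u', hT', hφ', hu', ⟨hv, rfl⟩ | ⟨rfl, hv⟩⟩ := h
  · have := height_mkV_union_childrenF (φ := φ') (by omega) hT' hu'
    rw [← hv] at this
    omega
  obtain ⟨-, -, -, -, b, hb⟩ :=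
    (mkV_eq_mkV_iff (vRel_self (admissible_union_childrenF hT' hu') hφ')).1 hv
  have hchild := append_singleton_mem_leavesF_union_childrenF (by omega) hT' hu'
  refine ⟨⟨fun i => ⟨b (u' ++ [i]), hb.1.mapsTo (hchild i)⟩, fun i j hij => ?_⟩,
    T', φ', u', b, hT', hφ', hu', rfl, hb, fun i => rfl⟩
  simpa using hb.1.injOn (hchild i) (hchild j) (congrArg Subtype.val hij)

theorem IsCollapse.eq (h0 : 0 < d) {c : Fin d → List (Fin d)} (h₁ : IsCollapse d T φ w₁ c)
    (h₂ : IsCollapse d T φ w₂ c) : w₁ = w₂ := by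
  obtain ⟨T₁, φ₁, u₁, b₁, hT₁, hφ₁, hu₁, rfl, hb₁, hc₁⟩ := h₁
  obtain ⟨T₂, φ₂, u₂, b₂, hT₂, hφ₂, hu₂, rfl, hb₂, hc₂⟩ := h₂
  have hg : (φ₂.trans φ.symm).trans (φ₁.trans φ.symm).symm = φ₂.trans φ₁.symm := by
    ext
    simp
  have hb := hb₂.trans hb₁.symm
  rw [hg] at hb
  refine Quot.sound ⟨hT₁, hT₂, hφ₁, hφ₂, _, hb.of_union_childrenF h0 hT₂ hT₁ hu₂ hu₁ fun i => ?_⟩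
  rw [Function.comp_apply, hc₂, ← hc₁,
    hb₁.1.invOn_invFunOn.1 (append_singleton_mem_leavesF_union_childrenF h0 hT₁ hu₁ i)]

end Vertices

/-- In the cube complex `𝒞` of the Neretin group `𝒩_d`, every vertex of height
`h` has exactly `h` neighbours of higher height and at most `h!` neighbours of lower height;
in particular `𝒞` is locally finite. -/
theorem neretin_complex_locally_finite (d : ℕ) (hd : 2 ≤ d)
    (v : CVert d) (h : ℕ) (hv : HeightIs d v h) :
    {w : CVert d | AdjC d v w ∧ ∃ h' : ℕ, HeightIs d w h' ∧ h < h'}.ncard = h ∧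
      {w : CVert d | AdjC d v w ∧ ∃ h' : ℕ, HeightIs d w h' ∧ h' < h}.ncard ≤
        Nat.factorial h ∧
      {w : CVert d | AdjC d v w}.Finite := by
  obtain ⟨T, φ, hT, hφ, rfl, rfl⟩ := hv
  simp only [setOf_adjC_and_exists_heightIs, ← height_mkV T φ]
  have hup := setOf_adjC_height_gt hd hT hφ
  set v := mkV d (T, φ)
  obtain ⟨f, hf⟩ := exists_injective_of_forall_exists_rel
    (s := {w | AdjC d v w ∧ w.height < v.height})
    (fun w hw => exists_isCollapse_of_adjC hd hw.1 hw.2) fun _ _ _ => IsCollapse.eq (by omega)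
  have hdown := Set.finite_coe_iff.1 (Finite.of_injective f hf)
  refine ⟨?_, ?_, ?_⟩
  · rw [hup, (injOn_mkV_union_childrenF hd hT).ncard_image, Set.ncard_coe_finset]
    rfl
  · calc _ = Nat.card _ := (Nat.card_coe_set_eq _).symm
      _ ≤ Nat.card (Fin d ↪ leavesF d T) := Nat.card_le_card_of_injective f hf
      _ = (leavesF d T).card.descFactorial d := by
        simp [Nat.card_eq_fintype_card, Fintype.card_embedding_eq]
      _ ≤ _ := Nat.descFactorial_le_factorial _ _
  · refine ((hup ▸ (leavesF d T).finite_toSet.image _).union hdown).subset fun w hw => ?_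
    rcases hw.height_cases (by omega) with h | h
    · exact .inl ⟨hw, by omega⟩
    · exact .inr ⟨hw, by omega⟩
end
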